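/- arXiv:1203.5688 — 4 statements merged into one kernel-verified Lean document; each statement's English description precedes it below -/
import Mathlib

section
/- Let (Λ, μ) be a probability space and let a, a', b, b' : Λ → ℝ be measurable functions with |a(λ)| ≤ 1, |a'(λ)| ≤ 1, |b(λ)| ≤ 1 and |b'(λ)| ≤ 1 for all λ. Then |∫ a·b dμ + ∫ a·b' dμ + ∫ a'·b dμ − ∫ a'·b' dμ| ≤ 2. -/
/-!
Pointwise, `a b + a b' + a' b - a' b' = a (b + b') + a' (b - b')`, and `|b + b'| + |b - b'| ≤ 2`
when `|b|, |b'| ≤ 1`, so the integrand of the CHSH combination is bounded by `2`; integrating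
against a probability measure preserves the bound.
-/

open MeasureTheory

lemma abs_add_add_abs_sub_le_two {w z : ℝ} (hw : |w| ≤ 1) (hz : |z| ≤ 1) :
    |w + z| + |w - z| ≤ 2 := by
  obtain ⟨hw₁, hw₂⟩ := abs_le.mp hw
  obtain ⟨hz₁, hz₂⟩ := abs_le.mp hz
  rcases abs_cases (w + z) with ⟨h₁, -⟩ | ⟨h₁, -⟩ <;>
    rcases abs_cases (w - z) with ⟨h₂, -⟩ | ⟨h₂, -⟩ <;> linarith

lemma abs_chsh_le_two {u v w z : ℝ} (hu : |u| ≤ 1) (hv : |v| ≤ 1) (hw : |w| ≤ 1)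
    (hz : |z| ≤ 1) : |u * w + u * z + v * w - v * z| ≤ 2 :=
  calc |u * w + u * z + v * w - v * z| = |u * (w + z) + v * (w - z)| := by ring_nf
    _ ≤ |u| * |w + z| + |v| * |w - z| := by
      rw [← abs_mul, ← abs_mul]
      exact abs_add_le _ _
    _ ≤ 1 * |w + z| + 1 * |w - z| := by gcongr
    _ ≤ 2 := by simpa using abs_add_add_abs_sub_le_two hw hz

lemma integrable_mul_of_abs_le_one {Λ : Type*} [MeasurableSpace Λ] {μ : Measure Λ}
    [IsFiniteMeasure μ] {f g : Λ → ℝ} (hf : Measurable f) (hg : Measurable g)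
    (hf₁ : ∀ x, |f x| ≤ 1) (hg₁ : ∀ x, |g x| ≤ 1) :
    Integrable (fun x => f x * g x) μ :=
  .of_bound (hf.mul hg).aestronglyMeasurable 1 <| ae_of_all _ fun x => by
    simpa [abs_mul] using mul_le_one₀ (hf₁ x) (abs_nonneg _) (hg₁ x)

/-- CHSH inequality for correlations in a local hidden-variables model. -/
theorem chsh_integral {Λ : Type*} [MeasurableSpace Λ] (μ : Measure Λ)
    [IsProbabilityMeasure μ] (a a' b b' : Λ → ℝ)
    (hma : Measurable a) (hma' : Measurable a')
    (hmb : Measurable b) (hmb' : Measurable b')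
    (ha : ∀ x, |a x| ≤ 1) (ha' : ∀ x, |a' x| ≤ 1)
    (hb : ∀ x, |b x| ≤ 1) (hb' : ∀ x, |b' x| ≤ 1) :
    |(∫ x, a x * b x ∂μ) + (∫ x, a x * b' x ∂μ) + (∫ x, a' x * b x ∂μ)
      - ∫ x, a' x * b' x ∂μ| ≤ 2 := by
  have hab := integrable_mul_of_abs_le_one (μ := μ) hma hmb ha hb
  have hab' := integrable_mul_of_abs_le_one (μ := μ) hma hmb' ha hb'
  have ha'b := integrable_mul_of_abs_le_one (μ := μ) hma' hmb ha' hb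
  have ha'b' := integrable_mul_of_abs_le_one (μ := μ) hma' hmb' ha' hb'
  calc _ = ‖∫ x, (a x * b x + a x * b' x + a' x * b x - a' x * b' x) ∂μ‖ := by
        rw [Real.norm_eq_abs, integral_sub, integral_add, integral_add]
        exacts [hab, hab', hab.add hab', ha'b, (hab.add hab').add ha'b, ha'b']
    _ ≤ 2 * μ.real Set.univ := norm_integral_le_of_norm_le_const <|
        ae_of_all _ fun x => abs_chsh_le_two (ha x) (ha' x) (hb x) (hb' x)
    _ = 2 := by simp
end

section
/- There do not exist a probability space (Λ, μ) together with families of measurable functions A : ℝ → Λ → ℝ and B : ℝ → Λ → ℝ satisfying |A(α)(λ)| ≤ 1 and |B(β)(λ)| ≤ 1 for all settings α, β ∈ ℝ and all λ ∈ Λ, such that for every pair of settings α, β ∈ ℝ one has ∫ A(α)(λ)·B(β)(λ) dμ(λ) = −cos(α − β). -/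
open MeasureTheory

lemma chsh_pointwise (a1 a2 b1 b2 : ℝ) (ha1 : |a1| ≤ 1) (ha2 : |a2| ≤ 1)
    (hb1 : |b1| ≤ 1) (hb2 : |b2| ≤ 1) :
    |a1 * b1 + a2 * b1 + a2 * b2 - a1 * b2| ≤ 2 := by
  have key : a1 * b1 + a2 * b1 + a2 * b2 - a1 * b2
      = a1 * (b1 - b2) + a2 * (b1 + b2) := by ring
  rw [key]
  calc |a1 * (b1 - b2) + a2 * (b1 + b2)|
      ≤ |a1 * (b1 - b2)| + |a2 * (b1 + b2)| := abs_add_le _ _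
    _ = |a1| * |b1 - b2| + |a2| * |b1 + b2| := by rw [abs_mul, abs_mul]
    _ ≤ 1 * |b1 - b2| + 1 * |b1 + b2| := by
        gcongr <;> positivity
    _ = |b1 - b2| + |b1 + b2| := by ring
    _ ≤ 2 := by
        rcases abs_cases (b1 - b2) with ⟨h1, _⟩ | ⟨h1, _⟩ <;>
        rcases abs_cases (b1 + b2) with ⟨h2, _⟩ | ⟨h2, _⟩ <;>
        rcases abs_le.mp hb1 with ⟨l1, u1⟩ <;>
        rcases abs_le.mp hb2 with ⟨l2, u2⟩ <;> linarith

/-- Bell's theorem: no local hidden-variables model reproduces the singlet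
correlation −cos(α − β) for all measurement settings. -/
theorem bell_theorem_no_lhv :
    ¬ ∃ (Λ : Type) (_ : MeasurableSpace Λ) (μ : Measure Λ)
        (_ : IsProbabilityMeasure μ) (A B : ℝ → Λ → ℝ),
      (∀ α, Measurable (A α)) ∧ (∀ β, Measurable (B β)) ∧
      (∀ α x, |A α x| ≤ 1) ∧ (∀ β x, |B β x| ≤ 1) ∧
      (∀ α β, (∫ x, A α x * B β x ∂μ) = -Real.cos (α - β)) := by
  rintro ⟨Λ, mΛ, μ, hμ, A, B, hAm, hBm, hA, hB, hcorr⟩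
  -- integrability of the products
  have hint : ∀ α β, Integrable (fun x => A α x * B β x) μ := by
    intro α β
    refine (integrable_const (1 : ℝ)).mono'
      ((hAm α).mul (hBm β)).aestronglyMeasurable (ae_of_all _ fun x => ?_)
    rw [Real.norm_eq_abs, abs_mul]
    calc |A α x| * |B β x| ≤ 1 * 1 := by
          gcongr <;> first | exact hA α x | exact hB β x | positivity
      _ = 1 := by ring
  set a1 : ℝ := 0
  set a2 : ℝ := Real.pi / 2
  set b1 : ℝ := Real.pi / 4
  set b2 : ℝ := 3 * Real.pi / 4
  have hS : (∫ x, (A a1 x * B b1 x + A a2 x * B b1 x + A a2 x * B b2 x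
      - A a1 x * B b2 x) ∂μ) = -(2 * Real.sqrt 2) := by
    have i12 : Integrable (fun x => A a1 x * B b1 x + A a2 x * B b1 x) μ :=
      (hint a1 b1).add (hint a2 b1)
    have i123 : Integrable
        (fun x => A a1 x * B b1 x + A a2 x * B b1 x + A a2 x * B b2 x) μ :=
      i12.add (hint a2 b2)
    rw [integral_sub i123 (hint a1 b2), integral_add i12 (hint a2 b2),
        integral_add (hint a1 b1) (hint a2 b1),
        hcorr, hcorr, hcorr, hcorr]
    have e1 : a1 - b1 = -(Real.pi / 4) := by simp [a1, b1]
    have e2 : a2 - b1 = Real.pi / 4 := by simp [a2, b1]; ring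
    have e3 : a2 - b2 = -(Real.pi / 4) := by simp [a2, b2]; ring
    have e4 : a1 - b2 = -(3 * Real.pi / 4) := by simp [a1, b2]
    have e5 : Real.cos (3 * Real.pi / 4) = -(Real.sqrt 2 / 2) := by
      have : (3 : ℝ) * Real.pi / 4 = Real.pi - Real.pi / 4 := by ring
      rw [this, Real.cos_pi_sub, Real.cos_pi_div_four]
    rw [e1, e2, e3, e4, Real.cos_neg, Real.cos_neg, Real.cos_pi_div_four, e5]
    ring
  have hbound : |∫ x, (A a1 x * B b1 x + A a2 x * B b1 x + A a2 x * B b2 x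
      - A a1 x * B b2 x) ∂μ| ≤ 2 := by
    have := norm_integral_le_of_norm_le_const (μ := μ) (C := 2)
      (f := fun x => A a1 x * B b1 x + A a2 x * B b1 x + A a2 x * B b2 x
        - A a1 x * B b2 x)
      (ae_of_all _ fun x => by
        rw [Real.norm_eq_abs]
        exact chsh_pointwise _ _ _ _ (hA a1 x) (hA a2 x) (hB b1 x) (hB b2 x))
    simpa [Real.norm_eq_abs] using this
  rw [hS] at hbound
  have hsqrt : (1 : ℝ) < Real.sqrt 2 := by
    nlinarith [Real.sq_sqrt (by norm_num : (2:ℝ) ≥ 0), Real.sqrt_nonneg 2]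
  rw [abs_neg, abs_of_nonneg (by positivity)] at hbound
  linarith
end

section
/- Let (Λ, μ) be a probability space and let f, g, h : Λ → ℝ be measurable functions taking only the values −1 and 1. Then ∫ f·g dμ + ∫ g·h dμ + ∫ f·h dμ ≥ −1. -/
open MeasureTheory

/-! Among three signs `a, b, c = ±1` two agree, so at most two of the products `ab, bc, ac` are `-1`
and `ab + bc + ac ≥ -1` pointwise; integrating against a probability measure gives the inequality. -/

theorem neg_one_le_mul_add_mul_add_mul {a b c : ℝ} (ha : a = -1 ∨ a = 1) (hb : b = -1 ∨ b = 1)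
    (hc : c = -1 ∨ c = 1) : -1 ≤ a * b + b * c + a * c := by
  rcases ha with rfl | rfl <;> rcases hb with rfl | rfl <;> rcases hc with rfl | rfl <;> norm_num

theorem integrable_mul_of_eq_neg_one_or_eq_one {Λ : Type*} [MeasurableSpace Λ] {μ : Measure Λ}
    [IsFiniteMeasure μ] {f g : Λ → ℝ} (hmf : Measurable f) (hmg : Measurable g)
    (hf : ∀ x, f x = -1 ∨ f x = 1) (hg : ∀ x, g x = -1 ∨ g x = 1) :
    Integrable (fun x => f x * g x) μ :=
  Integrable.of_mem_Icc (-1) 1 (hmf.mul hmg).aemeasurable <| ae_of_all _ fun x => by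
    rcases hf x with hfx | hfx <;> rcases hg x with hgx | hgx <;> norm_num [hfx, hgx]

/-- For any three ±1-valued observables admitting a joint distribution (i.e.
functions of a common hidden state), the sum of the three pairwise
correlations is at least −1. -/
theorem three_correlations_ge_neg_one {Λ : Type*} [MeasurableSpace Λ]
    (μ : Measure Λ) [IsProbabilityMeasure μ] (f g h : Λ → ℝ)
    (hmf : Measurable f) (hmg : Measurable g) (hmh : Measurable h)
    (hf : ∀ x, f x = -1 ∨ f x = 1)
    (hg : ∀ x, g x = -1 ∨ g x = 1)
    (hh : ∀ x, h x = -1 ∨ h x = 1) :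
    (∫ x, f x * g x ∂μ) + (∫ x, g x * h x ∂μ) + (∫ x, f x * h x ∂μ) ≥ -1 := by
  have ifg := integrable_mul_of_eq_neg_one_or_eq_one (μ := μ) hmf hmg hf hg
  have igh := integrable_mul_of_eq_neg_one_or_eq_one (μ := μ) hmg hmh hg hh
  have ifh := integrable_mul_of_eq_neg_one_or_eq_one (μ := μ) hmf hmh hf hh
  have ifg_gh : Integrable (fun x => f x * g x + g x * h x) μ := ifg.add igh
  calc (∫ x, f x * g x ∂μ) + (∫ x, g x * h x ∂μ) + (∫ x, f x * h x ∂μ)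
      = ∫ x, (f x * g x + g x * h x + f x * h x) ∂μ := by
        rw [← integral_add ifg igh, ← integral_add ifg_gh ifh]
    _ ≥ ∫ _, (-1 : ℝ) ∂μ := integral_mono (integrable_const _) (ifg_gh.add ifh) fun x =>
        neg_one_le_mul_add_mul_add_mul (hf x) (hg x) (hh x)
    _ = -1 := by simp
end

section
/- There exist self-adjoint matrices A₁, A₂, B₁, B₂ ∈ M₂(ℂ) with A₁² = A₂² = B₁² = B₂² = 1 (the identity matrix) and a vector ψ ∈ ℂ^(Fin 2 × Fin 2) with ‖ψ‖ = 1, such that the expectation value of the CHSH operator in the state ψ, namely star(ψ) ⬝ ((A₁ ⊗ₖ B₁ + A₁ ⊗ₖ B₂ + A₂ ⊗ₖ B₁ − A₂ ⊗ₖ B₂).mulVec ψ), equals 2√2. -/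
open Matrix Kronecker

/-!
Take `A₁ = σ_z`, `A₂ = σ_x`, `B₁ = (σ_z + σ_x)/√2`, `B₂ = (σ_z - σ_x)/√2` and the maximally
entangled state `ψ = (|00⟩ + |11⟩)/√2`. Since `σ_z` and `σ_x` anticommute, `B₁` and `B₂` are again
involutions. In `ψ` the expectation of `A ⊗ B` is `tr (A Bᵀ) / 2`, so the CHSH value is
`(tr (σ_z (B₁ + B₂)ᵀ) + tr (σ_x (B₁ - B₂)ᵀ)) / 2 = (√2 tr 1 + √2 tr 1) / 2 = 2√2`.
-/

theorem add_mul_self_eq_two_of_anticommute {R : Type*} [Ring R] {a b : R} (ha : a * a = 1)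
    (hb : b * b = 1) (hab : a * b + b * a = 0) : (a + b) * (a + b) = 2 := by
  calc (a + b) * (a + b) = a * a + (a * b + b * a) + b * b := by noncomm_ring
    _ = 2 := by rw [ha, hb, hab]; norm_num

theorem sub_mul_self_eq_two_of_anticommute {R : Type*} [Ring R] {a b : R} (ha : a * a = 1)
    (hb : b * b = 1) (hab : a * b + b * a = 0) : (a - b) * (a - b) = 2 := by
  calc (a - b) * (a - b) = a * a - (a * b + b * a) + b * b := by noncomm_ring
    _ = 2 := by rw [ha, hb, hab]; norm_num

theorem inv_sqrt_two_smul_mul_self {R : Type*} [Ring R] [Algebra ℝ R] {a : R} (ha : a * a = 2) :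
    (√2)⁻¹ • a * (√2)⁻¹ • a = 1 := by
  rw [smul_mul_smul_comm, ha, TsirelsonInequality.sqrt_two_inv_mul_self, Algebra.smul_def,
    ← map_ofNat (algebraMap ℝ R) 2, ← map_mul]
  norm_num

section MaxEntangled

variable (n : Type*) [Fintype n] [DecidableEq n]

noncomputable def maxEntangled : EuclideanSpace ℂ (n × n) :=
  WithLp.toLp 2 fun p => if p.1 = p.2 then ((√(Fintype.card n) : ℝ) : ℂ)⁻¹ else 0

theorem norm_maxEntangled [Nonempty n] : ‖maxEntangled n‖ = 1 := by
  rw [EuclideanSpace.norm_eq, Real.sqrt_eq_one]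
  simp [maxEntangled, Fintype.sum_prod_type, apply_ite]

variable {n}

theorem star_dotProduct_kronecker_mulVec_maxEntangled (A B : Matrix n n ℂ) :
    star (maxEntangled n : n × n → ℂ) ⬝ᵥ ((A ⊗ₖ B) *ᵥ (maxEntangled n : n × n → ℂ)) =
      trace (A * Bᵀ) / Fintype.card n := by
  have hc : ((√(Fintype.card n) : ℝ) : ℂ)⁻¹ * ((√(Fintype.card n) : ℝ) : ℂ)⁻¹ =
      (Fintype.card n : ℂ)⁻¹ := by
    rw [← mul_inv, ← Complex.ofReal_mul, Real.mul_self_sqrt (Nat.cast_nonneg _),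
      Complex.ofReal_natCast]
  simp only [dotProduct, maxEntangled, Pi.star_apply, RCLike.star_def,
    apply_ite (starRingEnd ℂ), map_inv₀, Complex.conj_ofReal, map_zero, mulVec,
    kroneckerMap_apply, mul_ite, mul_zero, Fintype.sum_prod_type, Finset.sum_ite_eq,
    Finset.mem_univ, ↓reduceIte, ← Finset.sum_mul, ite_mul, zero_mul, ← Finset.mul_sum, trace,
    diag_apply, mul_apply, transpose_apply]
  rw [mul_left_comm, hc, div_eq_mul_inv, mul_comm]

theorem star_dotProduct_chsh_mulVec_maxEntangled (A₁ A₂ B₁ B₂ : Matrix n n ℂ) :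
    star (maxEntangled n : n × n → ℂ) ⬝ᵥ
        ((A₁ ⊗ₖ B₁ + A₁ ⊗ₖ B₂ + A₂ ⊗ₖ B₁ - A₂ ⊗ₖ B₂) *ᵥ (maxEntangled n : n × n → ℂ)) =
      trace (A₁ * (B₁ + B₂)ᵀ + A₂ * (B₁ - B₂)ᵀ) / Fintype.card n := by
  simp only [add_mulVec, sub_mulVec, dotProduct_add, dotProduct_sub,
    star_dotProduct_kronecker_mulVec_maxEntangled, transpose_add, transpose_sub, mul_add,
    mul_sub, trace_add, trace_sub]
  ring

end MaxEntangled

def pauliX : Matrix (Fin 2) (Fin 2) ℂ := !![0, 1; 1, 0]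

def pauliZ : Matrix (Fin 2) (Fin 2) ℂ := !![1, 0; 0, -1]

theorem isHermitian_pauliX : pauliX.IsHermitian := by
  ext i j; fin_cases i <;> fin_cases j <;> simp [pauliX]

theorem isHermitian_pauliZ : pauliZ.IsHermitian := by
  ext i j; fin_cases i <;> fin_cases j <;> simp [pauliZ]

theorem transpose_pauliX : pauliXᵀ = pauliX := by
  ext i j; fin_cases i <;> fin_cases j <;> rfl

theorem transpose_pauliZ : pauliZᵀ = pauliZ := by
  ext i j; fin_cases i <;> fin_cases j <;> rfl

theorem pauliX_mul_self : pauliX * pauliX = 1 := by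
  simp [pauliX, one_fin_two]

theorem pauliZ_mul_self : pauliZ * pauliZ = 1 := by
  simp [pauliZ, one_fin_two]

theorem pauliZ_mul_pauliX_add_pauliX_mul_pauliZ : pauliZ * pauliX + pauliX * pauliZ = 0 := by
  ext i j; fin_cases i <;> fin_cases j <;> simp [pauliZ, pauliX]

/-- Quantum mechanics violates the CHSH inequality: there are self-adjoint
2×2 matrices squaring to the identity and a unit state vector in which the
CHSH operator has expectation value 2√2 (> 2). -/
theorem chsh_quantum_violation :
    ∃ A₁ A₂ B₁ B₂ : Matrix (Fin 2) (Fin 2) ℂ,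
      A₁.IsHermitian ∧ A₂.IsHermitian ∧ B₁.IsHermitian ∧ B₂.IsHermitian ∧
      A₁ * A₁ = 1 ∧ A₂ * A₂ = 1 ∧ B₁ * B₁ = 1 ∧ B₂ * B₂ = 1 ∧
      ∃ ψ : EuclideanSpace ℂ (Fin 2 × Fin 2), ‖ψ‖ = 1 ∧
        star (ψ : Fin 2 × Fin 2 → ℂ) ⬝ᵥ
          ((A₁ ⊗ₖ B₁ + A₁ ⊗ₖ B₂ + A₂ ⊗ₖ B₁ - A₂ ⊗ₖ B₂).mulVec
            (ψ : Fin 2 × Fin 2 → ℂ))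
          = ((2 * Real.sqrt 2 : ℝ) : ℂ) := by
  have hZX := pauliZ_mul_pauliX_add_pauliX_mul_pauliZ
  refine ⟨pauliZ, pauliX, (√2)⁻¹ • (pauliZ + pauliX), (√2)⁻¹ • (pauliZ - pauliX),
    isHermitian_pauliZ, isHermitian_pauliX,
    (isHermitian_pauliZ.add isHermitian_pauliX).smul (.all _),
    (isHermitian_pauliZ.sub isHermitian_pauliX).smul (.all _),
    pauliZ_mul_self, pauliX_mul_self,
    inv_sqrt_two_smul_mul_self
      (add_mul_self_eq_two_of_anticommute pauliZ_mul_self pauliX_mul_self hZX),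
    inv_sqrt_two_smul_mul_self
      (sub_mul_self_eq_two_of_anticommute pauliZ_mul_self pauliX_mul_self hZX),
    maxEntangled (Fin 2), norm_maxEntangled _, ?_⟩
  have hsum : (√2)⁻¹ • (pauliZ + pauliX) + (√2)⁻¹ • (pauliZ - pauliX) = √2 • pauliZ := by
    rw [← smul_add, add_add_sub_cancel, ← two_smul ℝ, smul_smul, inv_mul_eq_div, Real.div_sqrt]
  have hdiff : (√2)⁻¹ • (pauliZ + pauliX) - (√2)⁻¹ • (pauliZ - pauliX) = √2 • pauliX := by
    rw [← smul_sub, add_sub_sub_cancel, ← two_smul ℝ, smul_smul, inv_mul_eq_div, Real.div_sqrt]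
  rw [star_dotProduct_chsh_mulVec_maxEntangled, hsum, hdiff, transpose_smul, transpose_smul,
    transpose_pauliZ, transpose_pauliX, mul_smul_comm, mul_smul_comm, pauliZ_mul_self,
    pauliX_mul_self, ← smul_add, trace_smul, trace_add, trace_one, Fintype.card_fin,
    Complex.real_smul]
  push_cast
  ring
end
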